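/- Let F : ℝ^d → ℝ be m-strongly convex and differentiable with L-Lipschitz gradient, with global minimizer w_*. Let w ∈ ℝ^d and let G be a random vector with E[G] = ∇F(w) and E[‖G − ∇F(w)‖²] ≤ Z·‖∇F(w)‖², Z ≥ 0. If 0 < η < 2/(L(1+Z)) and w⁺ = w − η G, then E[F(w⁺)] − F(w_*) ≤ τ(η)·(F(w) − F(w_*)), where τ(η) = m L η²(1+Z) − 2 m η + 1 satisfies 0 < τ(η) < 1 whenever additionally τ(η) > 0. -/

import Mathlib

open MeasureTheory

lemma my_descent {d : ℕ} (F : EuclideanSpace ℝ (Fin d) → ℝ) (L : ℝ)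
    (hF : Differentiable ℝ F)
    (hLip : ∀ u v : EuclideanSpace ℝ (Fin d), ‖gradient F u - gradient F v‖ ≤ L * ‖u - v‖)
    (x y : EuclideanSpace ℝ (Fin d)) :
    F y ≤ F x + inner ℝ (gradient F x) (y - x) + (L / 2) * ‖y - x‖ ^ 2 := by
  set v := y - x with hv
  set g : ℝ → ℝ := fun t => F (x + t • v) - t * inner ℝ (gradient F x) v - L / 2 * t ^ 2 * ‖v‖ ^ 2
    with hg
  have hderiv : ∀ t : ℝ, HasDerivAt g
      ((inner ℝ (gradient F (x + t • v)) v : ℝ) - inner ℝ (gradient F x) v - L * t * ‖v‖ ^ 2) t := by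
    intro t
    have hc : HasDerivAt (fun t : ℝ => x + t • v) v t := by
      simpa using ((hasDerivAt_id t).smul_const v).const_add x
    have hFc : HasDerivAt (fun t : ℝ => F (x + t • v))
        ((inner ℝ (gradient F (x + t • v)) v : ℝ)) t := by
      have := ((hF (x + t • v)).hasGradientAt.hasFDerivAt).comp_hasDerivAt t hc
      rw [InnerProductSpace.toDual_apply_apply] at this
      exact this
    have h2 : HasDerivAt (fun t : ℝ => t * (inner ℝ (gradient F x) v : ℝ))
        (inner ℝ (gradient F x) v : ℝ) t := by
      simpa using (hasDerivAt_id t).mul_const (inner ℝ (gradient F x) v : ℝ)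
    have h3 : HasDerivAt (fun t : ℝ => L / 2 * t ^ 2 * ‖v‖ ^ 2) (L * t * ‖v‖ ^ 2) t := by
      have := ((hasDerivAt_pow 2 t).const_mul (L / 2)).mul_const (‖v‖ ^ 2)
      exact this.congr_deriv (by rw [show (2:ℕ) - 1 = 1 from rfl]; push_cast; ring)
    exact (hFc.sub h2).sub h3
  have hanti : ∀ t ∈ Set.Icc (0:ℝ) 1,
      (inner ℝ (gradient F (x + t • v)) v : ℝ) - inner ℝ (gradient F x) v - L * t * ‖v‖ ^ 2 ≤ 0 := by
    intro t ht
    have h1 : (inner ℝ (gradient F (x + t • v)) v : ℝ) - inner ℝ (gradient F x) v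
        = inner ℝ (gradient F (x + t • v) - gradient F x) v := by
      rw [inner_sub_left]
    rw [h1, sub_nonpos]
    calc (inner ℝ (gradient F (x + t • v) - gradient F x) v : ℝ)
        ≤ ‖gradient F (x + t • v) - gradient F x‖ * ‖v‖ := real_inner_le_norm _ _
      _ ≤ (L * ‖x + t • v - x‖) * ‖v‖ := by
          gcongr
          exact hLip _ _
      _ = L * (t * ‖v‖) * ‖v‖ := by
          rw [add_sub_cancel_left, norm_smul, Real.norm_eq_abs, abs_of_nonneg ht.1]
      _ = L * t * ‖v‖ ^ 2 := by ring
  have hmono : g 1 ≤ g 0 := by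
    have : AntitoneOn g (Set.Icc 0 1) := by
      apply antitoneOn_of_deriv_nonpos (convex_Icc 0 1)
      · exact Continuous.continuousOn (by
          exact continuous_iff_continuousAt.mpr fun t => (hderiv t).continuousAt)
      · intro t _
        exact (hderiv t).differentiableAt.differentiableWithinAt
      · intro t ht
        rw [(hderiv t).deriv]
        exact hanti t (Set.mem_Icc_of_Ioo (by simpa using ht))
    exact this (by norm_num) (by norm_num) (by norm_num)
  simp only [hg, one_smul, zero_smul, add_zero, one_pow, zero_pow, hv] at hmono
  have hxy : x + (y - x) = y := by abel
  rw [hxy] at hmono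
  linarith [hmono]

/-- Linear convergence factor of one stochastic gradient step under strong convexity. -/
theorem expected_contraction {Ω : Type*} [MeasureSpace Ω] (μ : Measure Ω) [IsProbabilityMeasure μ]
    (d : ℕ) (F : EuclideanSpace ℝ (Fin d) → ℝ) (m L : ℝ) (hm : 0 < m) (hL : 0 < L)
    (hF : Differentiable ℝ F)
    (hLip : ∀ u v : EuclideanSpace ℝ (Fin d), ‖gradient F u - gradient F v‖ ≤ L * ‖u - v‖)
    (hsc : ∀ x y : EuclideanSpace ℝ (Fin d),
      F y ≥ F x + inner ℝ (gradient F x) (y - x) + (m / 2) * ‖y - x‖ ^ 2)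
    (wstar : EuclideanSpace ℝ (Fin d)) (hmin : ∀ u, F wstar ≤ F u)
    (w : EuclideanSpace ℝ (Fin d)) (G : Ω → EuclideanSpace ℝ (Fin d))
    (hGmeas : Measurable G) (hGL2 : MemLp G 2 μ)
    (hunbiased : ∫ ω, G ω ∂μ = gradient F w)
    (Z : ℝ) (hZ : 0 ≤ Z)
    (hvar : ∫ ω, ‖G ω - gradient F w‖ ^ 2 ∂μ ≤ Z * ‖gradient F w‖ ^ 2)
    (η : ℝ) (hη : 0 < η) (hη' : η < 2 / (L * (1 + Z)))
    (hint : Integrable (fun ω => F (w - η • G ω)) μ) :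
    let τ : ℝ := m * L * η ^ 2 * (1 + Z) - 2 * m * η + 1
    (∫ ω, F (w - η • G ω) ∂μ) - F wstar ≤ τ * (F w - F wstar) ∧ (0 < τ → τ < 1) := by
  intro τ
  set gw := gradient F w with hgw
  have hden : 0 < L * (1 + Z) := mul_pos hL (by linarith)
  have hηL : η * (L * (1 + Z)) < 2 := (lt_div_iff₀ hden).mp hη'
  -- PL inequality
  have hPL : 2 * m * (F w - F wstar) ≤ ‖gw‖ ^ 2 := by
    have h1 := hsc w wstar
    have h2 : (0:ℝ) ≤ ‖gw + m • (wstar - w)‖ ^ 2 := sq_nonneg _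
    have h3 : ‖gw + m • (wstar - w)‖ ^ 2
        = ‖gw‖ ^ 2 + 2 * (m * inner ℝ gw (wstar - w)) + m ^ 2 * ‖wstar - w‖ ^ 2 := by
      rw [norm_add_sq_real, real_inner_smul_right, norm_smul, Real.norm_eq_abs,
        abs_of_nonneg hm.le, mul_pow]
    rw [h3] at h2
    nlinarith [h2, h1, hm]
  -- integrability facts
  have hG1 : Integrable G μ := hGL2.integrable one_le_two
  have hinner : Integrable (fun ω => (inner ℝ gw (G ω) : ℝ)) μ := hG1.inner_const gw |>.congr
    (Filter.Eventually.of_forall fun ω => real_inner_comm _ _)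
  have hEinner : ∫ ω, (inner ℝ gw (G ω) : ℝ) ∂μ = ‖gw‖ ^ 2 := by
    rw [integral_inner hG1 gw, hunbiased]
    exact real_inner_self_eq_norm_sq gw
  have hnormsq : Integrable (fun ω => ‖G ω‖ ^ 2) μ :=
    (memLp_two_iff_integrable_sq_norm hGL2.aestronglyMeasurable).mp hGL2
  have hGsub : MemLp (fun ω => G ω - gw) 2 μ := hGL2.sub (memLp_const gw)
  have hnormsq' : Integrable (fun ω => ‖G ω - gw‖ ^ 2) μ :=
    (memLp_two_iff_integrable_sq_norm hGsub.aestronglyMeasurable).mp hGsub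
  -- second moment bound
  have hEsq : ∫ ω, ‖G ω‖ ^ 2 ∂μ ≤ (1 + Z) * ‖gw‖ ^ 2 := by
    have hpt : ∀ ω, ‖G ω‖ ^ 2
        = ‖G ω - gw‖ ^ 2 + (2 * (inner ℝ gw (G ω) : ℝ) - ‖gw‖ ^ 2) := by
      intro ω
      have h1 : G ω = (G ω - gw) + gw := by abel
      have h2 : ‖(G ω - gw) + gw‖ ^ 2
          = ‖G ω - gw‖ ^ 2 + 2 * inner ℝ (G ω - gw) gw + ‖gw‖ ^ 2 := norm_add_sq_real _ _
      have h3 : (inner ℝ (G ω - gw) gw : ℝ) = inner ℝ gw (G ω) - ‖gw‖ ^ 2 := by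
        rw [inner_sub_left, real_inner_self_eq_norm_sq, real_inner_comm]
      rw [← h1] at h2
      rw [h2, h3]; ring
    have hInt2 : Integrable (fun ω => 2 * (inner ℝ gw (G ω) : ℝ) - ‖gw‖ ^ 2) μ :=
      (hinner.const_mul 2).sub (integrable_const _)
    calc ∫ ω, ‖G ω‖ ^ 2 ∂μ
        = ∫ ω, (‖G ω - gw‖ ^ 2 + (2 * (inner ℝ gw (G ω) : ℝ) - ‖gw‖ ^ 2)) ∂μ :=
          integral_congr_ae (Filter.Eventually.of_forall hpt)
      _ = (∫ ω, ‖G ω - gw‖ ^ 2 ∂μ)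
          + ((∫ ω, 2 * (inner ℝ gw (G ω) : ℝ) ∂μ) - ∫ ω, (‖gw‖ ^ 2 : ℝ) ∂μ) := by
          rw [integral_add hnormsq' hInt2, integral_sub (hinner.const_mul 2) (integrable_const _)]
      _ = (∫ ω, ‖G ω - gw‖ ^ 2 ∂μ) + (2 * ‖gw‖ ^ 2 - ‖gw‖ ^ 2) := by
          rw [integral_const_mul, hEinner, integral_const]
          simp
      _ ≤ Z * ‖gw‖ ^ 2 + (2 * ‖gw‖ ^ 2 - ‖gw‖ ^ 2) := by gcongr
      _ = (1 + Z) * ‖gw‖ ^ 2 := by ring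
  -- descent lemma pointwise and integrated
  have hpt : ∀ ω, F (w - η • G ω)
      ≤ F w - η * (inner ℝ gw (G ω) : ℝ) + L / 2 * η ^ 2 * ‖G ω‖ ^ 2 := by
    intro ω
    have h := my_descent F L hF hLip w (w - η • G ω)
    have h1 : w - η • G ω - w = -(η • G ω) := by abel
    rw [h1] at h
    have h2 : (inner ℝ gw (-(η • G ω)) : ℝ) = -(η * inner ℝ gw (G ω)) := by
      rw [inner_neg_right, real_inner_smul_right]
    have h3 : ‖-(η • G ω)‖ ^ 2 = η ^ 2 * ‖G ω‖ ^ 2 := by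
      rw [norm_neg, norm_smul, Real.norm_eq_abs, mul_pow, sq_abs]
    rw [h2, h3] at h
    linarith [h]
  have hsub : Integrable (fun ω => F w - η * (inner ℝ gw (G ω) : ℝ)) μ :=
    (integrable_const (F w)).sub (hinner.const_mul η)
  have hmul : Integrable (fun ω => L / 2 * η ^ 2 * ‖G ω‖ ^ 2) μ :=
    hnormsq.const_mul (L / 2 * η ^ 2)
  have hRHSint : Integrable
      (fun ω => F w - η * (inner ℝ gw (G ω) : ℝ) + L / 2 * η ^ 2 * ‖G ω‖ ^ 2) μ :=
    hsub.add hmul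
  have hImain : (∫ ω, F (w - η • G ω) ∂μ)
      ≤ F w - η * ‖gw‖ ^ 2 + L / 2 * η ^ 2 * ∫ ω, ‖G ω‖ ^ 2 ∂μ := by
    calc (∫ ω, F (w - η • G ω) ∂μ)
        ≤ ∫ ω, (F w - η * (inner ℝ gw (G ω) : ℝ) + L / 2 * η ^ 2 * ‖G ω‖ ^ 2) ∂μ :=
          integral_mono hint hRHSint hpt
      _ = F w - η * ‖gw‖ ^ 2 + L / 2 * η ^ 2 * ∫ ω, ‖G ω‖ ^ 2 ∂μ := by
          rw [integral_add hsub hmul,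
            integral_sub (integrable_const (F w)) (hinner.const_mul η),
            integral_const_mul, integral_const_mul, hEinner, integral_const]
          simp
  constructor
  · have hcoef : (0:ℝ) ≤ L / 2 * η ^ 2 := by positivity
    have hfinal : (∫ ω, F (w - η • G ω) ∂μ)
        ≤ F w - η * ‖gw‖ ^ 2 + L / 2 * η ^ 2 * ((1 + Z) * ‖gw‖ ^ 2) := by
      calc (∫ ω, F (w - η • G ω) ∂μ)
          ≤ F w - η * ‖gw‖ ^ 2 + L / 2 * η ^ 2 * ∫ ω, ‖G ω‖ ^ 2 ∂μ := hImain
        _ ≤ F w - η * ‖gw‖ ^ 2 + L / 2 * η ^ 2 * ((1 + Z) * ‖gw‖ ^ 2) := by gcongr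
    have hc : 0 < η - L / 2 * η ^ 2 * (1 + Z) := by nlinarith [hηL, hη]
    have hkey : 0 ≤ (η - L / 2 * η ^ 2 * (1 + Z)) * (‖gw‖ ^ 2 - 2 * m * (F w - F wstar)) :=
      mul_nonneg hc.le (by linarith)
    show (∫ ω, F (w - η • G ω) ∂μ) - F wstar
        ≤ (m * L * η ^ 2 * (1 + Z) - 2 * m * η + 1) * (F w - F wstar)
    nlinarith [hfinal, hkey]
  · intro _
    show m * L * η ^ 2 * (1 + Z) - 2 * m * η + 1 < 1
    have h2 : (0:ℝ) < 2 - η * (L * (1 + Z)) := by linarith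
    nlinarith [mul_pos (mul_pos hm hη) h2]
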